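/- Let 1 ≤ n < d and let Γ = {(y, 𝒜(y)) : y ∈ ℝ^n} ⊂ ℝ^d be the graph of a Lipschitz function 𝒜 : ℝ^n → ℝ^{d−n} with Lipschitz constant Lip(𝒜) < 1. Then there exists a constant C > 0, depending only on n, d, and Lip(𝒜), such that for every z ∈ Γ and all 0 < a ≤ b, the n-dimensional Hausdorff measure of the intersection of Γ with the closed annulus A(z,a,b) := {x : a ≤ |x−z| ≤ b} satisfies ℋ^n(Γ ∩ A(z,a,b)) ≤ C (b − a) b^{n−1}. -/

import Mathlib

open MeasureTheory Metric Set
open scoped NNReal ENNReal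

/-- Projection onto the first `n` coordinates of `ℝ^{n+m}`. -/
noncomputable def piH (n m : ℕ) (x : EuclideanSpace ℝ (Fin (n + m))) :
    EuclideanSpace ℝ (Fin n) :=
  (WithLp.equiv 2 (Fin n → ℝ)).symm (fun i => x (Fin.castAdd m i))

/-- Projection onto the last `m` coordinates of `ℝ^{n+m}`. -/
noncomputable def piV (n m : ℕ) (x : EuclideanSpace ℝ (Fin (n + m))) :
    EuclideanSpace ℝ (Fin m) :=
  (WithLp.equiv 2 (Fin m → ℝ)).symm (fun i => x (Fin.natAdd n i))

/-!
Write `Γ` as the image of `G y = (y, 𝒜 y)`, which is `√(1 + L²)`-Lipschitz; it then suffices to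
bound the measure of the set `S ⊆ ℝⁿ` of parameters whose graph point lies in the annulus around
`z = G y₀`. The function `f y = |G y - z|` satisfies `f y ≥ |y - y₀|` and grows along every ray
from `y₀` at rate at least `c = (1 - L²) / √(1 + L²)`, which is positive exactly because `L < 1`.
Hence the radial rescaling `Φ y = f y • (y - y₀) / |y - y₀|` has a Lipschitz inverse on `S`, and
it maps `S` into the annulus `A(0, a, b) ⊆ ℝⁿ`, whose measure is `(bⁿ - aⁿ) ℋⁿ(B(0, 1))`.
-/

theorem le_hausdorffMeasure_image_of_antilipschitzWith_domRestrict {X Y : Type*}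
    [EMetricSpace X] [MeasurableSpace X] [BorelSpace X]
    [EMetricSpace Y] [MeasurableSpace Y] [BorelSpace Y] {f : X → Y} {s : Set X} {K : ℝ≥0}
    (hf : AntilipschitzWith K (s.domRestrict f)) {d : ℝ} (hd : 0 ≤ d) :
    μH[d] s ≤ (K : ℝ≥0∞) ^ d * μH[d] (f '' s) :=
  calc μH[d] s = μH[d] (((↑) : s → X) '' univ) := by rw [image_univ, Subtype.range_coe]
    _ = μH[d] (univ : Set s) := isometry_subtype_coe.hausdorffMeasure_image (.inl hd) _
    _ ≤ (K : ℝ≥0∞) ^ d * μH[d] (s.domRestrict f '' univ) := hf.le_hausdorffMeasure_image hd _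
    _ = (K : ℝ≥0∞) ^ d * μH[d] (f '' s) := by rw [image_univ, range_domRestrict]

open Module in
theorem addHaar_closedBall_diff_ball_le {E : Type*} [NormedAddCommGroup E] [NormedSpace ℝ E]
    [MeasurableSpace E] [BorelSpace E] [FiniteDimensional ℝ E] [Nontrivial E]
    (μ : Measure E) [μ.IsAddHaarMeasure] (x : E) {a b : ℝ} (ha : 0 ≤ a) (hab : a ≤ b) :
    μ (closedBall x b \ ball x a) ≤
      ENNReal.ofReal (finrank ℝ E * (b - a) * b ^ (finrank ℝ E - 1)) * μ (ball 0 1) := by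
  set d := finrank ℝ E
  have hb : 0 ≤ b := ha.trans hab
  have hpow : b ^ d - a ^ d ≤ d * (b - a) * b ^ (d - 1) := by
    have := abs_pow_sub_pow_le b a d
    rw [abs_of_nonneg (sub_nonneg.2 hab), abs_of_nonneg hb, abs_of_nonneg ha,
      max_eq_left hab] at this
    linarith [le_abs_self (b ^ d - a ^ d)]
  rw [measure_sdiff (ball_subset_closedBall.trans (closedBall_subset_closedBall hab))
      measurableSet_ball.nullMeasurableSet measure_ball_lt_top.ne,
    Measure.addHaar_closedBall μ x hb, Measure.addHaar_ball μ x ha, tsub_le_iff_right,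
    ← add_mul, ← ENNReal.ofReal_add (by positivity) (by positivity)]
  gcongr
  linarith

section radialRescale

variable {E : Type*} [NormedAddCommGroup E] [NormedSpace ℝ E]

noncomputable def radialRescale (y₀ : E) (f : E → ℝ) (y : E) : E :=
  (f y / ‖y - y₀‖) • (y - y₀)

lemma norm_radialRescale {y₀ y : E} (f : E → ℝ) (hy : y ≠ y₀) :
    ‖radialRescale y₀ f y‖ = |f y| := by
  have : ‖y - y₀‖ ≠ 0 := norm_ne_zero_iff.2 (sub_ne_zero.2 hy)
  rw [radialRescale, norm_smul, norm_div, Real.norm_eq_abs, norm_norm, div_mul_cancel₀ _ this]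

variable {y₀ : E} {f : E → ℝ} {K : ℝ≥0} {c : ℝ}

lemma mul_norm_sub_le_mul_norm_radialRescale_sub_of_norm_le (hf₀ : ∀ y, ‖y - y₀‖ ≤ f y)
    (hf : LipschitzWith K f) (hc : 0 ≤ c)
    (hray : ∀ v : E, ∀ t ∈ Icc (0 : ℝ) 1, c * ((1 - t) * ‖v‖) ≤ f (y₀ + v) - f (y₀ + t • v))
    {y₁ y₂ : E} (h₁ : y₁ ≠ y₀) (h₂ : y₂ ≠ y₀) (hr : ‖y₂ - y₀‖ ≤ ‖y₁ - y₀‖) :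
    c * ‖y₁ - y₂‖ ≤ (1 + 2 * (K + c)) * ‖radialRescale y₀ f y₁ - radialRescale y₀ f y₂‖ := by
  set r₁ := ‖y₁ - y₀‖ with hr₁_def
  set r₂ := ‖y₂ - y₀‖ with hr₂_def
  have hr₁ : 0 < r₁ := norm_pos_iff.2 (sub_ne_zero.2 h₁)
  have hr₂ : 0 < r₂ := norm_pos_iff.2 (sub_ne_zero.2 h₂)
  have hf₂ : 0 < f y₂ := hr₂.trans_le (hf₀ y₂)
  set D := ‖radialRescale y₀ f y₁ - radialRescale y₀ f y₂‖
  have hfD : |f y₁ - f y₂| ≤ D := by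
    simpa only [norm_radialRescale f h₁, norm_radialRescale f h₂, abs_of_pos hf₂,
      abs_of_nonneg (hr₁.le.trans (hf₀ y₁))] using abs_norm_sub_norm_le
        (radialRescale y₀ f y₁) (radialRescale y₀ f y₂)
  -- Pass from `y₁` to `y₂` through the point `w` of the ray through `y₁` at distance `r₂`
  -- from `y₀`: the radial leg is controlled by the growth of `f`, the angular leg by `D`.
  set w := y₀ + (r₂ / r₁) • (y₁ - y₀)
  have hy₁w : ‖y₁ - w‖ = r₁ - r₂ := by
    rw [show y₁ - w = (1 - r₂ / r₁) • (y₁ - y₀) by simp only [w]; module, norm_smul,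
      Real.norm_eq_abs, abs_of_nonneg (sub_nonneg.2 ((div_le_one hr₁).2 hr)), ← hr₁_def]
    field_simp
  have hwy₂ : ‖w - y₂‖ ≤ 2 * D := by
    have : w - y₂ = (r₂ / f y₂) • (radialRescale y₀ f y₁ - radialRescale y₀ f y₂ -
        ((f y₁ - f y₂) / r₁) • (y₁ - y₀)) := by
      simp only [w, radialRescale, ← hr₁_def, ← hr₂_def]
      match_scalars <;> field_simp <;> ring
    rw [this, norm_smul, Real.norm_of_nonneg (by positivity)]
    calc r₂ / f y₂ * ‖radialRescale y₀ f y₁ - radialRescale y₀ f y₂ -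
          ((f y₁ - f y₂) / r₁) • (y₁ - y₀)‖
        ≤ 1 * (D + |f y₁ - f y₂|) := by
          gcongr
          · exact (div_le_one hf₂).2 (hf₀ y₂)
          · refine (norm_sub_le _ _).trans_eq ?_
            rw [norm_smul, norm_div, Real.norm_eq_abs, norm_norm, ← hr₁_def,
              div_mul_cancel₀ _ hr₁.ne']
      _ ≤ 2 * D := by linarith
  have hray₁ : c * (r₁ - r₂) ≤ f y₁ - f w := by
    have := hray (y₁ - y₀) (r₂ / r₁) ⟨by positivity, (div_le_one hr₁).2 hr⟩
    rwa [add_sub_cancel, ← hr₁_def, sub_mul, one_mul, div_mul_cancel₀ _ hr₁.ne'] at this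
  have hfw : f y₂ - f w ≤ K * ‖w - y₂‖ := by
    have := hf.dist_le_mul w y₂
    rw [Real.dist_eq, dist_eq_norm] at this
    linarith [neg_abs_le (f w - f y₂)]
  have htri : ‖y₁ - y₂‖ ≤ (r₁ - r₂) + ‖w - y₂‖ := hy₁w ▸ norm_sub_le_norm_sub_add_norm_sub _ _ _
  have hK : (K : ℝ) * ‖w - y₂‖ ≤ K * (2 * D) := by gcongr
  have hcw : c * ‖w - y₂‖ ≤ c * (2 * D) := by gcongr
  have hcy : c * ‖y₁ - y₂‖ ≤ c * ((r₁ - r₂) + ‖w - y₂‖) := by gcongr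
  linarith [le_abs_self (f y₁ - f y₂)]

lemma antilipschitzWith_domRestrict_radialRescale (hf₀ : ∀ y, ‖y - y₀‖ ≤ f y)
    (hf : LipschitzWith K f) (hc : 0 < c)
    (hray : ∀ v : E, ∀ t ∈ Icc (0 : ℝ) 1, c * ((1 - t) * ‖v‖) ≤ f (y₀ + v) - f (y₀ + t • v))
    {s : Set E} (hs : y₀ ∉ s) :
    AntilipschitzWith (Real.toNNReal ((1 + 2 * (K + c)) / c))
      (s.domRestrict (radialRescale y₀ f)) := by
  refine AntilipschitzWith.of_le_mul_dist fun y₁ y₂ => ?_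
  have h₁ : (y₁ : E) ≠ y₀ := fun h => hs (h ▸ y₁.2)
  have h₂ : (y₂ : E) ≠ y₀ := fun h => hs (h ▸ y₂.2)
  rw [Subtype.dist_eq, dist_eq_norm, dist_eq_norm, Real.coe_toNNReal _ (by positivity),
    div_mul_eq_mul_div, le_div_iff₀ hc, mul_comm]
  rcases le_total ‖(y₂ : E) - y₀‖ ‖(y₁ : E) - y₀‖ with hr | hr
  · exact mul_norm_sub_le_mul_norm_radialRescale_sub_of_norm_le hf₀ hf hc.le hray h₁ h₂ hr
  · rw [norm_sub_rev (y₁ : E), norm_sub_rev (s.domRestrict _ y₁)]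
    exact mul_norm_sub_le_mul_norm_radialRescale_sub_of_norm_le hf₀ hf hc.le hray h₂ h₁ hr

end radialRescale

noncomputable def graphMap {n m : ℕ} (A : EuclideanSpace ℝ (Fin n) → EuclideanSpace ℝ (Fin m))
    (y : EuclideanSpace ℝ (Fin n)) : EuclideanSpace ℝ (Fin (n + m)) :=
  (WithLp.equiv 2 (Fin (n + m) → ℝ)).symm
    (Fin.append (WithLp.equiv 2 (Fin n → ℝ) y) (WithLp.equiv 2 (Fin m → ℝ) (A y)))

section graphMap

variable {n m : ℕ} {A : EuclideanSpace ℝ (Fin n) → EuclideanSpace ℝ (Fin m)}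

lemma setOf_piV_eq_range_graphMap :
    {x | piV n m x = A (piH n m x)} = range (graphMap A) := by
  ext x
  constructor
  · intro hx
    refine ⟨piH n m x, ?_⟩
    ext j
    refine Fin.addCases (fun i => ?_) (fun i => ?_) j
    · simp [graphMap, piH]
    · have hi : A (piH n m x) i = piV n m x i := by rw [← hx]
      simp [graphMap, hi, piV]
  · rintro ⟨y, rfl⟩
    ext i
    simp [graphMap, piH, piV]

lemma dist_graphMap_sq (y y' : EuclideanSpace ℝ (Fin n)) :
    dist (graphMap A y) (graphMap A y') ^ 2 = dist y y' ^ 2 + dist (A y) (A y') ^ 2 := by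
  simp only [EuclideanSpace.dist_eq]
  rw [Real.sq_sqrt (by positivity), Real.sq_sqrt (by positivity), Real.sq_sqrt (by positivity),
    Fin.sum_univ_add]
  simp [graphMap]

lemma dist_le_dist_graphMap (y y' : EuclideanSpace ℝ (Fin n)) :
    dist y y' ≤ dist (graphMap A y) (graphMap A y') :=
  (pow_le_pow_iff_left₀ dist_nonneg dist_nonneg two_ne_zero).1 <| by
    rw [dist_graphMap_sq]; exact le_add_of_nonneg_right (sq_nonneg _)

variable {L : ℝ≥0}

lemma lipschitzWith_graphMap (hA : LipschitzWith L A) :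
    LipschitzWith (NNReal.sqrt (1 + L ^ 2)) (graphMap A) := by
  refine LipschitzWith.of_dist_le_mul fun y y' => ?_
  rw [Real.coe_sqrt, ← Real.sqrt_sq dist_nonneg, ← Real.sqrt_sq (dist_nonneg (x := y)),
    ← Real.sqrt_mul (by positivity), dist_graphMap_sq]
  gcongr
  have := hA.dist_le_mul y y'
  push_cast
  nlinarith [dist_nonneg (x := A y) (y := A y')]

lemma dist_graphMap_radial_growth (hA : LipschitzWith L A) (hL : L ≤ 1)
    (y₀ v : EuclideanSpace ℝ (Fin n)) {t : ℝ} (ht : t ∈ Icc (0 : ℝ) 1) :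
    (1 - (L : ℝ) ^ 2) / NNReal.sqrt (1 + L ^ 2) * ((1 - t) * ‖v‖) ≤
      dist (graphMap A (y₀ + v)) (graphMap A y₀) -
        dist (graphMap A (y₀ + t • v)) (graphMap A y₀) := by
  obtain ⟨ht₀, ht₁⟩ := ht
  rcases eq_or_ne v 0 with rfl | hv
  · simp
  set K := NNReal.sqrt (1 + L ^ 2)
  have hK : (0 : ℝ) < K := NNReal.coe_pos.2 (NNReal.sqrt_pos.2 (by positivity))
  have hL₁ : 0 ≤ 1 - (L : ℝ) ^ 2 := by
    nlinarith [L.coe_nonneg, NNReal.coe_le_coe.2 hL]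
  set r := ‖v‖
  have hr : 0 < r := norm_pos_iff.2 hv
  have hd₁ : dist (y₀ + v) y₀ = r := by rw [dist_eq_norm, add_sub_cancel_left]
  have hd₂ : dist (y₀ + t • v) y₀ = t * r := by
    rw [dist_eq_norm, add_sub_cancel_left, norm_smul, Real.norm_of_nonneg ht₀]
  have hd₁₂ : dist (y₀ + v) (y₀ + t • v) = (1 - t) * r := by
    rw [dist_add_left, dist_eq_norm, show v - t • v = (1 - t) • v by module, norm_smul,
      Real.norm_of_nonneg (sub_nonneg.2 ht₁)]
  set f₁ := dist (graphMap A (y₀ + v)) (graphMap A y₀)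
  set f₂ := dist (graphMap A (y₀ + t • v)) (graphMap A y₀)
  set α := dist (A (y₀ + v)) (A y₀)
  set β := dist (A (y₀ + t • v)) (A y₀)
  have hf₁ : f₁ ^ 2 = r ^ 2 + α ^ 2 := by rw [dist_graphMap_sq, hd₁]
  have hf₂ : f₂ ^ 2 = (t * r) ^ 2 + β ^ 2 := by rw [dist_graphMap_sq, hd₂]
  have hα : α ≤ L * r := hd₁ ▸ hA.dist_le_mul _ _
  have hβ : β ≤ L * (t * r) := hd₂ ▸ hA.dist_le_mul _ _
  have hαβ : β - α ≤ L * ((1 - t) * r) :=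
    (le_abs_self _).trans <| (abs_dist_sub_le _ _ _).trans <|
      (hA.dist_le_mul _ _).trans_eq (by rw [dist_comm, hd₁₂])
  have hrf₁ : r ≤ f₁ := hd₁ ▸ dist_le_dist_graphMap _ _
  have hsum : f₁ + f₂ ≤ K * ((1 + t) * r) := by
    have h₁ := hd₁ ▸ (lipschitzWith_graphMap hA).dist_le_mul (y₀ + v) y₀
    have h₂ := hd₂ ▸ (lipschitzWith_graphMap hA).dist_le_mul (y₀ + t • v) y₀
    linarith
  -- `f₁² - f₂² = (1 - t²) r² - (β - α) (α + β)`
  have hsq : (1 - (L : ℝ) ^ 2) * ((1 - t) * r) * ((1 + t) * r) ≤ (f₁ - f₂) * (f₁ + f₂) := by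
    have hαβ' : (β - α) * (α + β) ≤ L * ((1 - t) * r) * (L * ((1 + t) * r)) :=
      mul_le_mul hαβ (by linarith) (by positivity) (by positivity)
    nlinarith
  have hpos : 0 < f₁ + f₂ := add_pos_of_pos_of_nonneg (hr.trans_le hrf₁) dist_nonneg
  refine le_of_mul_le_mul_right ?_ hpos
  calc (1 - (L : ℝ) ^ 2) / K * ((1 - t) * r) * (f₁ + f₂)
      ≤ (1 - (L : ℝ) ^ 2) / K * ((1 - t) * r) * (K * ((1 + t) * r)) := by
        gcongr
    _ = (1 - (L : ℝ) ^ 2) * ((1 - t) * r) * ((1 + t) * r) := by field_simp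
    _ ≤ (f₁ - f₂) * (f₁ + f₂) := hsq

end graphMap

lemma exists_hausdorffMeasure_preimage_graphMap_annulus_le {n m : ℕ}
    {A : EuclideanSpace ℝ (Fin n) → EuclideanSpace ℝ (Fin m)} {L : ℝ≥0}
    (hA : LipschitzWith L A) (hL : L < 1) :
    ∃ P : ℝ≥0, 0 < P ∧ ∀ (y₀ : EuclideanSpace ℝ (Fin n)) {a b : ℝ}, 0 < a →
      μH[n] (graphMap A ⁻¹' (closedBall (graphMap A y₀) b \ ball (graphMap A y₀) a)) ≤
        (P : ℝ≥0∞) ^ (n : ℝ) * μH[n] (closedBall (0 : EuclideanSpace ℝ (Fin n)) b \ ball 0 a) := by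
  set K := NNReal.sqrt (1 + L ^ 2)
  set c : ℝ := (1 - (L : ℝ) ^ 2) / K
  have hK : (0 : ℝ) < K := NNReal.coe_pos.2 (NNReal.sqrt_pos.2 (by positivity))
  have hc : 0 < c := by
    have : (L : ℝ) < 1 := hL
    exact div_pos (by nlinarith [L.coe_nonneg]) hK
  refine ⟨Real.toNNReal ((1 + 2 * (K + c)) / c), Real.toNNReal_pos.2 (by positivity),
    fun y₀ a b ha => ?_⟩
  set f := fun y => dist (graphMap A y) (graphMap A y₀)
  set S := graphMap A ⁻¹' (closedBall (graphMap A y₀) b \ ball (graphMap A y₀) a)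
  have hS : y₀ ∉ S := by simp [S, ha]
  have hf : LipschitzWith K f := by
    rw [← one_mul K]
    exact (LipschitzWith.dist_left (graphMap A y₀)).comp (lipschitzWith_graphMap hA)
  have hΦ := antilipschitzWith_domRestrict_radialRescale
    (fun y => (dist_eq_norm y y₀).symm.trans_le (dist_le_dist_graphMap y y₀)) hf hc
    (fun v t ht => dist_graphMap_radial_growth hA hL.le y₀ v ht) hS
  have hmaps : radialRescale y₀ f '' S ⊆ closedBall 0 b \ ball 0 a := by
    rintro _ ⟨y, hy, rfl⟩
    have hy₀ : y ≠ y₀ := ne_of_mem_of_not_mem hy hS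
    simpa [norm_radialRescale f hy₀, f, S, and_comm] using hy
  calc μH[n] S ≤ _ := le_hausdorffMeasure_image_of_antilipschitzWith_domRestrict hΦ (by positivity)
    _ ≤ _ := by gcongr

lemma exists_hausdorffMeasure_range_graphMap_inter_annulus_le {n m : ℕ}
    {A : EuclideanSpace ℝ (Fin n) → EuclideanSpace ℝ (Fin m)} {L : ℝ≥0}
    (hA : LipschitzWith L A) (hL : L < 1) :
    ∃ M : ℝ≥0, 0 < M ∧ ∀ (y₀ : EuclideanSpace ℝ (Fin n)) {a b : ℝ}, 0 < a →
      μH[n] (range (graphMap A) ∩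
          {x | a ≤ dist x (graphMap A y₀) ∧ dist x (graphMap A y₀) ≤ b}) ≤
        M * μH[n] (closedBall (0 : EuclideanSpace ℝ (Fin n)) b \ ball 0 a) := by
  obtain ⟨P, hP, hpre⟩ := exists_hausdorffMeasure_preimage_graphMap_annulus_le hA hL
  set K := NNReal.sqrt (1 + L ^ 2)
  refine ⟨(K * P) ^ n, pow_pos (mul_pos (NNReal.sqrt_pos.2 (by positivity)) hP) n,
    fun y₀ a b ha => ?_⟩
  have hannulus : {x | a ≤ dist x (graphMap A y₀) ∧ dist x (graphMap A y₀) ≤ b} =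
      closedBall (graphMap A y₀) b \ ball (graphMap A y₀) a := by
    ext; simp [and_comm]
  rw [hannulus, inter_comm, ← image_preimage_eq_inter_range]
  calc _ ≤ (K : ℝ≥0∞) ^ (n : ℝ) * μH[n] (graphMap A ⁻¹' _) :=
        (lipschitzWith_graphMap hA).hausdorffMeasure_image_le (by positivity) _
    _ ≤ (K : ℝ≥0∞) ^ (n : ℝ) * ((P : ℝ≥0∞) ^ (n : ℝ) *
          μH[n] (closedBall (0 : EuclideanSpace ℝ (Fin n)) b \ ball 0 a)) := by
        gcongr; exact hpre y₀ ha
    _ = _ := by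
        rw [ENNReal.rpow_natCast, ENNReal.rpow_natCast, ← mul_assoc, ← mul_pow]
        push_cast; rfl

theorem stmt6_general (n m : ℕ) (hn : 1 ≤ n)
    (A : EuclideanSpace ℝ (Fin n) → EuclideanSpace ℝ (Fin m)) (L : ℝ≥0) (hL : L < 1)
    (hA : LipschitzWith L A) :
    ∃ C > 0, ∀ z ∈ {x : EuclideanSpace ℝ (Fin (n + m)) | piV n m x = A (piH n m x)},
      ∀ a b : ℝ, 0 < a → a ≤ b →
        μH[n] ({x : EuclideanSpace ℝ (Fin (n + m)) | piV n m x = A (piH n m x)}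
            ∩ {x | a ≤ dist x z ∧ dist x z ≤ b})
          ≤ ENNReal.ofReal (C * (b - a) * b ^ (n - 1)) := by
  have : Nontrivial (EuclideanSpace ℝ (Fin n)) :=
    Module.nontrivial_of_finrank_pos (R := ℝ) (by rw [finrank_euclideanSpace_fin]; exact hn)
  obtain ⟨M, hM, hgraph⟩ := exists_hausdorffMeasure_range_graphMap_inter_annulus_le hA hL
  set B := μH[n] (ball (0 : EuclideanSpace ℝ (Fin n)) 1)
  have hB : B ≠ ∞ := measure_ball_lt_top.ne
  have hB₀ : 0 < B.toReal := ENNReal.toReal_pos (measure_ball_pos _ _ one_pos).ne' hB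
  refine ⟨M * n * B.toReal, by positivity, ?_⟩
  rintro _ hz a b ha hab
  rw [setOf_piV_eq_range_graphMap] at hz ⊢
  obtain ⟨y₀, rfl⟩ := hz
  have hw : 0 ≤ (n : ℝ) * (b - a) * b ^ (n - 1) :=
    mul_nonneg (mul_nonneg n.cast_nonneg (sub_nonneg.2 hab)) (pow_nonneg (ha.le.trans hab) _)
  calc _ ≤ M * μH[n] (closedBall (0 : EuclideanSpace ℝ (Fin n)) b \ ball 0 a) := hgraph y₀ ha
    _ ≤ M * (ENNReal.ofReal (n * (b - a) * b ^ (n - 1)) * B) := by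
        gcongr
        simpa using addHaar_closedBall_diff_ball_le μH[n] (0 : EuclideanSpace ℝ (Fin n)) ha.le hab
    _ = ENNReal.ofReal (M * n * B.toReal * (b - a) * b ^ (n - 1)) := by
        rw [← ENNReal.ofReal_toReal hB, ← ENNReal.ofReal_coe_nnreal, ← ENNReal.ofReal_mul hw,
          ← ENNReal.ofReal_mul M.coe_nonneg, ENNReal.toReal_ofReal ENNReal.toReal_nonneg]
        congr 1
        ring

/-- Lemma 2.3: if `Γ ⊂ ℝ^d` (`d = n + m`) is the graph of a Lipschitz
function `𝒜 : ℝ^n → ℝ^{d−n}` with `Lip(𝒜) < 1`, then there is `C > 0` depending only on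
`n`, `d` and `Lip(𝒜)` such that for every `z ∈ Γ` and all `0 < a ≤ b`,
`ℋ^n(Γ ∩ A(z,a,b)) ≤ C (b − a) b^{n−1}`, where `A(z,a,b)` is the closed annulus. -/
theorem stmt6 (n m : ℕ) (hn : 1 ≤ n) (hm : 1 ≤ m)
    (A : EuclideanSpace ℝ (Fin n) → EuclideanSpace ℝ (Fin m)) (L : ℝ≥0) (hL : L < 1)
    (hA : LipschitzWith L A) :
    ∃ C > 0, ∀ z ∈ {x : EuclideanSpace ℝ (Fin (n + m)) | piV n m x = A (piH n m x)},
      ∀ a b : ℝ, 0 < a → a ≤ b →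
        μH[n] ({x : EuclideanSpace ℝ (Fin (n + m)) | piV n m x = A (piH n m x)}
            ∩ {x | a ≤ dist x z ∧ dist x z ≤ b})
          ≤ ENNReal.ofReal (C * (b - a) * b ^ (n - 1)) :=
  stmt6_general n m hn A L hL hA
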